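/- Let k, a ∈ ℝ with k ∉ {1, 2}, and let L : ℝ[X] → ℝ be a linear functional such that L(D_{n,k}·D_{m,k}) = hₙ(k)·δ_{n,m} for all n, m ∈ ℕ, where h₀(k) = 2 − k and hₙ(k) = aⁿ for n ≥ 1. Then for every n ∈ ℕ, the even moments are given explicitly by L(X^{2n}) = −(1/2) · ((k−2)^{2n}/(k−1)^{n+1}) · (−a)ⁿ · ( k/(k−2) + Σ_{j=0}^{n} B(1/2, j) · (4(k−1)/(k−2)²)ʲ ), where B(1/2, j) = (1/2)·(1/2 − 1)···(1/2 − j + 1)/j! denotes the generalized binomial coefficient (with B(1/2, 0) = 1). -/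

import Mathlib

open Polynomial

/-- The Dickson polynomial of the `(k+1)`-th kind with real parameters `k, a`,
as a polynomial in `ℝ[X]`, defined by the three-term recurrence. -/
noncomputable def dicksonP (k a : ℝ) : ℕ → Polynomial ℝ
  | 0 => C (2 - k)
  | 1 => X
  | n + 2 => X * dicksonP k a (n + 1) - C a * dicksonP k a n

/-- The generalized binomial coefficient `B(1/2, j)`. -/
noncomputable def halfChoose (j : ℕ) : ℝ :=
  (∏ i ∈ Finset.range j, (1 / 2 - (i : ℝ))) / (j.factorial : ℝ)


/-!
Put `U_m := D_{m,1}`, the Dickson polynomials with `k = 1`, and `q := (k-1) X² + a (k-2)²`.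
Orthogonality against `D_{0,k} = 2 - k` gives `L(D_{m,k}) = δ_{m,0}`, and
`D_{m+2,k} = U_{m+2} + (k-1) a U_m` then gives `L(q U_m) = a δ_{m,0}`. The semicircle
functional `T` with `T(U_m) = δ_{m,0}` has the Catalan numbers as moments,
`T(X^{2n}) = aⁿ Catₙ`; this is read off from the Joukowski substitution `X = u + a/u`. Since the
`U_m` span `ℝ[X]`, `L(q p) = a T(p)` for every `p`. Taking `p = X^{2n}` gives the recurrence
`(k-1) L(X^{2n+2}) + a (k-2)² L(X^{2n}) = a^{n+1} Catₙ` with `L(1) = 1/(2-k)`. The closed form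
satisfies the same recurrence because `B(1/2, n+1) (-4)^{n+1} = -2 Catₙ`.
-/

theorem dicksonP_one (k a : ℝ) : dicksonP k a 1 = X := rfl

theorem dicksonP_add_two (k a : ℝ) (m : ℕ) :
    dicksonP k a (m + 2) = X * dicksonP k a (m + 1) - C a * dicksonP k a m := rfl

theorem X_mul_dicksonP_succ (k a : ℝ) (m : ℕ) :
    X * dicksonP k a (m + 1) = dicksonP k a (m + 2) + C a * dicksonP k a m := by
  rw [dicksonP_add_two]; ring

theorem dicksonP_one_zero (a : ℝ) : dicksonP 1 a 0 = 1 := by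
  show C (2 - 1) = 1; norm_num

theorem X_mul_dicksonP_one_zero (a : ℝ) : X * dicksonP 1 a 0 = dicksonP 1 a 1 := by
  rw [dicksonP_one_zero, mul_one, dicksonP_one]

theorem dicksonP_add_two_eq_dicksonP_one (k a : ℝ) :
    ∀ m, dicksonP k a (m + 2) = dicksonP 1 a (m + 2) + C ((k - 1) * a) * dicksonP 1 a m
  | 0 => by simp only [dicksonP, map_mul, map_sub, map_one, map_ofNat]; ring
  | 1 => by simp only [dicksonP, map_mul, map_sub, map_one, map_ofNat]; ring
  | m + 2 => by
    rw [dicksonP_add_two k, dicksonP_add_two_eq_dicksonP_one k a (m + 1),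
      dicksonP_add_two_eq_dicksonP_one k a m, dicksonP_add_two 1 a (m + 2),
      dicksonP_add_two 1 a m]
    ring

theorem linearMap_ext_dicksonP_one {M : Type*} [AddCommGroup M] [Module ℝ M] {a : ℝ}
    {Λ₁ Λ₂ : ℝ[X] →ₗ[ℝ] M} (h : ∀ m, Λ₁ (dicksonP 1 a m) = Λ₂ (dicksonP 1 a m)) : Λ₁ = Λ₂ := by
  have hXpow : ∀ N m, Λ₁ (X ^ N * dicksonP 1 a m) = Λ₂ (X ^ N * dicksonP 1 a m) := by
    intro N
    induction N with
    | zero => simpa using h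
    | succ N ih =>
      rintro (_ | m)
      · rw [pow_succ, mul_assoc, X_mul_dicksonP_one_zero, ih]
      · rw [pow_succ, mul_assoc, X_mul_dicksonP_succ, mul_add, mul_left_comm, ← smul_eq_C_mul,
          map_add, map_add, map_smul, map_smul, ih, ih]
  refine lhom_ext' fun n => LinearMap.ext fun c => ?_
  have hmon : monomial n c = c • (X ^ n * dicksonP 1 a 0) := by
    rw [dicksonP_one_zero, mul_one, smul_X_eq_monomial]
  simp only [LinearMap.comp_apply, hmon, map_smul, hXpow]

theorem cast_catalan_eq_choose_sub_choose (n : ℕ) :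
    (catalan n : ℝ) = (2 * n).choose n - (2 * n).choose (n + 1) := by
  have hcat : ((n : ℝ) + 1) * catalan n = (2 * n).choose n := by
    exact_mod_cast (succ_mul_catalan_eq_centralBinom n).trans (Nat.centralBinom_eq_two_mul_choose n)
  have hchoose : ((2 * n).choose (n + 1) : ℝ) * (n + 1) = (2 * n).choose n * n := by
    have := Nat.choose_succ_right_eq (2 * n) n
    rw [show 2 * n - n = n by omega] at this
    exact_mod_cast this
  apply mul_left_cancel₀ (show (n : ℝ) + 1 ≠ 0 by positivity)
  linear_combination hcat + hchoose

theorem add_two_mul_catalan_succ (n : ℕ) :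
    ((n : ℝ) + 2) * catalan (n + 1) = 2 * (2 * n + 1) * catalan n := by
  have h₀ : ((n : ℝ) + 1) * catalan n = n.centralBinom := by
    exact_mod_cast succ_mul_catalan_eq_centralBinom n
  have h₁ : ((n : ℝ) + 2) * catalan (n + 1) = (n + 1).centralBinom := by
    exact_mod_cast succ_mul_catalan_eq_centralBinom (n + 1)
  have h₂ : ((n : ℝ) + 1) * (n + 1).centralBinom = 2 * (2 * n + 1) * n.centralBinom := by
    exact_mod_cast Nat.succ_mul_centralBinom_succ n
  apply mul_left_cancel₀ (show (n : ℝ) + 1 ≠ 0 by positivity)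
  linear_combination (↑n + 1) * h₁ + h₂ - 2 * (2 * n + 1) * h₀

theorem halfChoose_succ_mul (j : ℕ) :
    halfChoose (j + 1) * (j + 1) = halfChoose j * (1 / 2 - j) := by
  simp only [halfChoose, Finset.prod_range_succ, Nat.factorial_succ, Nat.cast_mul]
  field_simp
  push_cast
  ring

theorem halfChoose_succ_mul_neg_four_pow (n : ℕ) :
    halfChoose (n + 1) * (-4) ^ (n + 1) = -2 * catalan n := by
  induction n with
  | zero => norm_num [halfChoose]
  | succ n ih =>
    apply mul_left_cancel₀ (show (n : ℝ) + 2 ≠ 0 by positivity)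
    have h := halfChoose_succ_mul (n + 1)
    push_cast at h ⊢
    linear_combination (-4) ^ (n + 1) * (-4) * h + (-4 * (1 / 2 - (n + 1))) * ih
      + 2 * add_two_mul_catalan_succ n

section Joukowski

open LaurentPolynomial

noncomputable def joukowski (a : ℝ) : ℝ[T;T⁻¹] := T 1 + LaurentPolynomial.C a * T (-1)

/-- `p ↦ [u¹] (u - a/u) p(u + a/u)`: the substitution `X = u + a/u` turns `(u - a/u) U_m` into
`u^{m+1} - (a/u)^{m+1}`, whose `u¹`-coefficient is `δ_{m,0}`. -/
noncomputable def semicircleFunctional (a : ℝ) : ℝ[X] →ₗ[ℝ] ℝ where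
  toFun p := ((T 1 - LaurentPolynomial.C a * T (-1)) * aeval (joukowski a) p).coeff 1
  map_add' p q := by simp [mul_add]
  map_smul' c p := by simp

theorem semicircleFunctional_apply (a : ℝ) (p : ℝ[X]) :
    semicircleFunctional a p =
      ((T 1 - LaurentPolynomial.C a * T (-1)) * aeval (joukowski a) p).coeff 1 := rfl

theorem coeff_one_T_one_sub_mul (a : ℝ) (f : ℝ[T;T⁻¹]) :
    ((T 1 - LaurentPolynomial.C a * T (-1)) * f).coeff 1 = f.coeff 0 - a * f.coeff 2 := by
  rw [← single_eq_C_mul_T, T, sub_mul, AddMonoidAlgebra.coeff_sub, Finsupp.sub_apply,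
    AddMonoidAlgebra.coeff_single_mul_apply, AddMonoidAlgebra.coeff_single_mul_apply]
  norm_num

theorem T_one_sub_mul_aeval_dicksonP_one (a : ℝ) (m : ℕ) :
    (T 1 - LaurentPolynomial.C a * T (-1)) * aeval (joukowski a) (dicksonP 1 a m) =
      T 1 ^ (m + 1) - LaurentPolynomial.C a ^ (m + 1) * T (-1) ^ (m + 1) := by
  have huv : (T 1 : ℝ[T;T⁻¹]) * T (-1) = 1 := by rw [← T_add]; simp
  induction m using Nat.twoStepInduction with
  | zero => rw [dicksonP_one_zero, map_one]; ring
  | one => rw [dicksonP_one, aeval_X, joukowski]; ring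
  | more m ih₀ ih₁ =>
    simp only [dicksonP_add_two, map_sub, map_mul, aeval_X, aeval_C,
      ← LaurentPolynomial.C_eq_algebraMap]
    rw [joukowski] at ih₀ ih₁ ⊢
    linear_combination (T 1 + LaurentPolynomial.C a * T (-1)) * ih₁ - LaurentPolynomial.C a * ih₀
      + (LaurentPolynomial.C a * T 1 ^ (m + 1)
        - LaurentPolynomial.C a ^ (m + 2) * T (-1) ^ (m + 1)) * huv

theorem semicircleFunctional_dicksonP_one (a : ℝ) (m : ℕ) :
    semicircleFunctional a (dicksonP 1 a m) = if m = 0 then 1 else 0 := by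
  rw [semicircleFunctional_apply, T_one_sub_mul_aeval_dicksonP_one]
  simp [T_pow, ← map_pow, ← single_eq_C_mul_T, Finsupp.single_apply]
  omega

theorem coeff_joukowski_pow (a : ℝ) (N : ℕ) (i : ℤ) :
    (joukowski a ^ N).coeff i = ∑ j ∈ Finset.range (N + 1),
      if (j : ℤ) - (N - j : ℕ) = i then a ^ (N - j) * N.choose j else 0 := by
  rw [joukowski, add_pow]
  simp only [AddMonoidAlgebra.coeff_sum, Finsupp.finsetSum_apply]
  refine Finset.sum_congr rfl fun j _ => ?_
  have hterm : T 1 ^ j * (LaurentPolynomial.C a * T (-1)) ^ (N - j) * (N.choose j : ℝ[T;T⁻¹]) =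
      LaurentPolynomial.C (a ^ (N - j) * N.choose j) * T ((j : ℤ) - (N - j : ℕ)) := by
    rw [mul_pow, T_pow, T_pow, ← map_pow, map_mul, map_natCast, mul_one, mul_neg_one,
      sub_eq_add_neg, T_add]
    ring
  rw [hterm, ← single_eq_C_mul_T, AddMonoidAlgebra.coeff_single, Finsupp.single_apply]

theorem semicircleFunctional_X_pow_two_mul (a : ℝ) (n : ℕ) :
    semicircleFunctional a (X ^ (2 * n)) = a ^ n * catalan n := by
  rw [semicircleFunctional_apply, map_pow, aeval_X, coeff_one_T_one_sub_mul, coeff_joukowski_pow,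
    coeff_joukowski_pow,
    Finset.sum_eq_single n (fun j hj hjn => if_neg (by simp at hj; omega))
      (fun h => (h (Finset.mem_range.2 (by omega))).elim),
    Finset.sum_eq_single (n + 1) (fun j hj hjn => if_neg (by simp at hj; omega))
      (fun h => by rw [Nat.choose_eq_zero_of_lt (by simp at h; omega)]; simp),
    cast_catalan_eq_choose_sub_choose]
  rcases n with _ | n
  · simp
  · rw [show 2 * (n + 1) - (n + 1) = n + 1 by omega, show 2 * (n + 1) - (n + 1 + 1) = n by omega,
      if_pos (by simp), if_pos (by push_cast; ring)]
    ring

end Joukowski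

section Moments

variable {k a : ℝ} {L : ℝ[X] →ₗ[ℝ] ℝ}

theorem apply_dicksonP_of_orthogonal (hk2 : k ≠ 2)
    (hL : ∀ n m : ℕ, L (dicksonP k a n * dicksonP k a m) =
      if n = m then (if n = 0 then 2 - k else a ^ n) else 0) (m : ℕ) :
    L (dicksonP k a m) = if m = 0 then 1 else 0 := by
  have h := hL m 0
  rw [show dicksonP k a 0 = C (2 - k) from rfl, mul_comm, ← smul_eq_C_mul, map_smul,
    smul_eq_mul] at h
  have hk : (2 : ℝ) - k ≠ 0 := sub_ne_zero.2 (Ne.symm hk2)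
  split_ifs at h ⊢
  · exact mul_left_cancel₀ hk (h.trans (mul_one _).symm)
  · exact (mul_eq_zero.1 h).resolve_left hk

theorem two_sub_mul_apply_one (hD : ∀ m, L (dicksonP k a m) = if m = 0 then 1 else 0) :
    (2 - k) * L 1 = 1 := by
  have h := hD 0
  rwa [show dicksonP k a 0 = C (2 - k) * 1 by rw [mul_one]; rfl, ← smul_eq_C_mul, map_smul,
    smul_eq_mul, if_pos rfl] at h

theorem apply_dicksonP_one_add_two (hD : ∀ m, L (dicksonP k a m) = if m = 0 then 1 else 0)
    (m : ℕ) : L (dicksonP 1 a (m + 2)) = (1 - k) * a * L (dicksonP 1 a m) := by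
  have h := hD (m + 2)
  rw [dicksonP_add_two_eq_dicksonP_one, map_add, ← smul_eq_C_mul, map_smul, smul_eq_mul,
    if_neg (by omega)] at h
  linear_combination h

theorem apply_quadratic_mul_dicksonP_one
    (hD : ∀ m, L (dicksonP k a m) = if m = 0 then 1 else 0) (m : ℕ) :
    L ((C (k - 1) * X ^ 2 + C (a * (k - 2) ^ 2)) * dicksonP 1 a m) =
      a * if m = 0 then 1 else 0 := by
  have hL2 := apply_dicksonP_one_add_two hD
  rw [add_mul, mul_assoc, map_add, ← smul_eq_C_mul, ← smul_eq_C_mul, map_smul, map_smul,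
    smul_eq_mul, smul_eq_mul]
  rcases m with _ | _ | j
  · have e : X ^ 2 * dicksonP 1 a 0 = dicksonP 1 a 2 + C a * dicksonP 1 a 0 := by
      simp only [dicksonP_add_two, dicksonP_one_zero, dicksonP_one, zero_add]; ring
    rw [e, map_add, ← smul_eq_C_mul, map_smul, smul_eq_mul, hL2, dicksonP_one_zero, if_pos rfl]
    linear_combination a * two_sub_mul_apply_one hD
  · have e : X ^ 2 * dicksonP 1 a 1 = dicksonP 1 a 3 + C (2 * a) * dicksonP 1 a 1 := by
      simp only [dicksonP_add_two, dicksonP_one_zero, dicksonP_one, zero_add, map_mul, map_ofNat]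
      ring
    have h1 : L (dicksonP 1 a 1) = 0 := hD 1
    rw [e, map_add, ← smul_eq_C_mul, map_smul, smul_eq_mul, hL2, h1]
    simp
  · have e : X ^ 2 * dicksonP 1 a (j + 2) =
        dicksonP 1 a (j + 4) + C (2 * a) * dicksonP 1 a (j + 2) + C (a ^ 2) * dicksonP 1 a j := by
      simp only [dicksonP_add_two, map_mul, map_pow, map_ofNat]
      ring
    rw [e, map_add, map_add, ← smul_eq_C_mul, ← smul_eq_C_mul, map_smul, map_smul, smul_eq_mul,
      smul_eq_mul, hL2 (j + 2), hL2 j, if_neg (by omega)]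
    ring

theorem apply_quadratic_mul_eq_semicircleFunctional
    (hD : ∀ m, L (dicksonP k a m) = if m = 0 then 1 else 0) (p : ℝ[X]) :
    L ((C (k - 1) * X ^ 2 + C (a * (k - 2) ^ 2)) * p) = a * semicircleFunctional a p := by
  have h : L ∘ₗ LinearMap.mulLeft ℝ (C (k - 1) * X ^ 2 + C (a * (k - 2) ^ 2)) =
      a • semicircleFunctional a :=
    linearMap_ext_dicksonP_one (a := a) fun m => by
      rw [LinearMap.comp_apply, LinearMap.mulLeft_apply, apply_quadratic_mul_dicksonP_one hD,
        LinearMap.smul_apply, semicircleFunctional_dicksonP_one, smul_eq_mul]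
  simpa using LinearMap.congr_fun h p

theorem apply_X_pow_two_mul_recurrence
    (hD : ∀ m, L (dicksonP k a m) = if m = 0 then 1 else 0) (n : ℕ) :
    (k - 1) * L (X ^ (2 * (n + 1))) + a * (k - 2) ^ 2 * L (X ^ (2 * n)) =
      a ^ (n + 1) * catalan n := by
  have h := apply_quadratic_mul_eq_semicircleFunctional hD (X ^ (2 * n))
  rw [semicircleFunctional_X_pow_two_mul, add_mul, mul_assoc, ← pow_add, map_add,
    ← smul_eq_C_mul, ← smul_eq_C_mul, map_smul, map_smul, smul_eq_mul, smul_eq_mul] at h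
  rw [show 2 * (n + 1) = 2 + 2 * n by ring, h]
  ring

end Moments

noncomputable def dicksonEvenMoment (k a : ℝ) (n : ℕ) : ℝ :=
  -(1 / 2) * ((k - 2) ^ (2 * n) / (k - 1) ^ (n + 1)) * (-a) ^ n *
    (k / (k - 2) + ∑ j ∈ Finset.range (n + 1), halfChoose j * (4 * (k - 1) / (k - 2) ^ 2) ^ j)

theorem two_sub_mul_dicksonEvenMoment_zero {k : ℝ} (hk1 : k ≠ 1) (hk2 : k ≠ 2) (a : ℝ) :
    (2 - k) * dicksonEvenMoment k a 0 = 1 := by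
  have : k - 1 ≠ 0 := sub_ne_zero.2 hk1
  have : k - 2 ≠ 0 := sub_ne_zero.2 hk2
  simp [dicksonEvenMoment, halfChoose]
  field_simp
  ring

theorem dicksonEvenMoment_recurrence {k : ℝ} (hk1 : k ≠ 1) (hk2 : k ≠ 2) (a : ℝ) (n : ℕ) :
    (k - 1) * dicksonEvenMoment k a (n + 1) + a * (k - 2) ^ 2 * dicksonEvenMoment k a n =
      a ^ (n + 1) * catalan n := by
  have : k - 1 ≠ 0 := sub_ne_zero.2 hk1
  have : k - 2 ≠ 0 := sub_ne_zero.2 hk2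
  have h := halfChoose_succ_mul_neg_four_pow n
  simp only [dicksonEvenMoment, Finset.sum_range_succ _ (n + 1)]
  set S := ∑ j ∈ Finset.range (n + 1), halfChoose j * (4 * (k - 1) / (k - 2) ^ 2) ^ j
  have ht : (4 * (k - 1) / (k - 2) ^ 2) ^ (n + 1) * (k - 2) ^ (2 * (n + 1)) =
      4 ^ (n + 1) * (k - 1) ^ (n + 1) := by
    rw [div_pow, pow_mul, div_mul_cancel₀ _ (by positivity), mul_pow]
  generalize (4 * (k - 1) / (k - 2) ^ 2) ^ (n + 1) = t at ht ⊢
  have hneg : (-a) ^ (n + 1) * 4 ^ (n + 1) = a ^ (n + 1) * (-4) ^ (n + 1) := by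
    rw [← mul_pow, ← mul_pow]; ring
  field_simp
  linear_combination (-(k - 1) ^ (n + 2) * (-a) ^ (n + 1) * (k - 2) * halfChoose (n + 1)) * ht
    - (k - 1) ^ (n + 2) * (k - 2) * halfChoose (n + 1) * (k - 1) ^ (n + 1) * hneg
    - (k - 1) ^ (n + 2) * (k - 2) * (k - 1) ^ (n + 1) * a ^ (n + 1) * h

theorem dickson_even_moments (k a : ℝ) (hk1 : k ≠ 1) (hk2 : k ≠ 2)
    (L : Polynomial ℝ →ₗ[ℝ] ℝ)
    (hL : ∀ n m : ℕ, L (dicksonP k a n * dicksonP k a m) =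
      if n = m then (if n = 0 then 2 - k else a ^ n) else 0) :
    ∀ n : ℕ,
      L (X ^ (2 * n)) =
        -(1 / 2) * ((k - 2) ^ (2 * n) / (k - 1) ^ (n + 1)) * (-a) ^ n *
          (k / (k - 2) +
            ∑ j ∈ Finset.range (n + 1),
              halfChoose j * (4 * (k - 1) / (k - 2) ^ 2) ^ j) := by
  have hD := apply_dicksonP_of_orthogonal hk2 hL
  intro n
  show L (X ^ (2 * n)) = dicksonEvenMoment k a n
  induction n with
  | zero =>
    apply mul_left_cancel₀ (sub_ne_zero.2 (Ne.symm hk2))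
    rw [mul_zero, pow_zero, two_sub_mul_apply_one hD, two_sub_mul_dicksonEvenMoment_zero hk1 hk2]
  | succ n ih =>
    apply mul_left_cancel₀ (sub_ne_zero.2 hk1)
    linear_combination apply_X_pow_two_mul_recurrence hD n
      - dicksonEvenMoment_recurrence hk1 hk2 a n - a * (k - 2) ^ 2 * ih
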